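/- arXiv:1111.2431 — 6 statements merged into one kernel-verified Lean document; each statement's English description precedes it below -/
import Mathlib

section
/- For every integer m ≥ 0, every integer k, every integer n ≥ 1, and every holomorphic function f : ℍ → ℂ, one has D^m(T_n^{(k)} f) = n^{-m} · T_n^{(k+2m)}(D^m f). -/
open Complex BigOperators

noncomputable section

/-- The upper half-plane ℍ, viewed as a subset of ℂ. -/
def UpperHalf : Set ℂ := {z : ℂ | 0 < z.im}

/-- The differential operator `D = (1/(2πi)) d/dz`. -/
def Dop (f : ℂ → ℂ) : ℂ → ℂ := fun z => (1 / (2 * (Real.pi : ℂ) * I)) * deriv f z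

/-- The `n`-th Hecke operator in weight `k`:
`(T_n^{(k)} f)(z) = n^{k-1} Σ_{d|n} d^{-k} Σ_{b=0}^{d-1} f((nz + bd)/d²)`. -/
def hecke (k : ℤ) (n : ℕ) (f : ℂ → ℂ) : ℂ → ℂ := fun z =>
  (n : ℂ) ^ (k - 1) * ∑ d ∈ n.divisors, (d : ℂ) ^ (-k) *
    ∑ b ∈ Finset.range d, f (((n : ℂ) * z + (b : ℂ) * (d : ℂ)) / ((d : ℂ) ^ 2))

/-- `σ_k(m) = Σ_{d|m} d^k`. -/
def sigmaFn (k m : ℕ) : ℕ := ∑ d ∈ m.divisors, d ^ k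

/-- The Eisenstein series `E_k(z) = 1 − (2k/B_k) Σ_{m≥1} σ_{k−1}(m) q^m`, `q = e^{2πiz}`. -/
def Eis (k : ℕ) : ℂ → ℂ := fun z =>
  1 - (2 * (k : ℂ) / ((bernoulli k : ℚ) : ℂ)) *
    ∑' m : ℕ, ((sigmaFn (k - 1) (m + 1) : ℕ) : ℂ) *
      Complex.exp (2 * (Real.pi : ℂ) * I * z) ^ (m + 1)

/-- The nearly holomorphic Eisenstein series `E_2*(z) = E_2(z) − 3/(π Im z)`. -/
def E2star : ℂ → ℂ := fun z => Eis 2 z - 3 / ((Real.pi : ℂ) * (z.im : ℂ))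

/-- `Δ_12 = (E_4³ − E_6²)/1728`, the discriminant cusp form of weight 12. -/
def Delta12 : ℂ → ℂ := fun z => (Eis 4 z ^ 3 - Eis 6 z ^ 2) / 1728

/-- `Δ_16`, the unique normalized cusp form of weight 16 (equal to `E_4 Δ_12`). -/
def Delta16 : ℂ → ℂ := fun z => Eis 4 z * Delta12 z

/-- `Δ_18`, the unique normalized cusp form of weight 18 (equal to `E_6 Δ_12`). -/
def Delta18 : ℂ → ℂ := fun z => Eis 6 z * Delta12 z

/-- `Δ_20`, the unique normalized cusp form of weight 20 (equal to `E_8 Δ_12`). -/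
def Delta20 : ℂ → ℂ := fun z => Eis 8 z * Delta12 z

/-- `Δ_22`, the unique normalized cusp form of weight 22 (equal to `E_10 Δ_12`). -/
def Delta22 : ℂ → ℂ := fun z => Eis 10 z * Delta12 z

/-- `Δ_26`, the unique normalized cusp form of weight 26 (equal to `E_14 Δ_12`). -/
def Delta26 : ℂ → ℂ := fun z => Eis 14 z * Delta12 z

/-- A quasimodular form of weight `k` on `SL₂(ℤ)`: a ℂ-linear combination of monomials
`E_2^a E_4^b E_6^c` with `2a + 4b + 6c = k` (as a function on the upper half-plane). -/
def IsQuasimodular (k : ℕ) (f : ℂ → ℂ) : Prop :=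
  ∃ (S : Finset (ℕ × ℕ × ℕ)) (c : ℕ × ℕ × ℕ → ℂ),
    (∀ t ∈ S, 2 * t.1 + 4 * t.2.1 + 6 * t.2.2 = k) ∧
    ∀ z ∈ UpperHalf,
      f z = ∑ t ∈ S, c t * Eis 2 z ^ t.1 * Eis 4 z ^ t.2.1 * Eis 6 z ^ t.2.2

/-- A quasimodular form of weight `k` and depth `≤ p`: a ℂ-linear combination of monomials
`E_2^a E_4^b E_6^c` with `2a + 4b + 6c = k` and `a ≤ p`. -/
def IsQuasimodularDepth (k p : ℕ) (f : ℂ → ℂ) : Prop :=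
  ∃ (S : Finset (ℕ × ℕ × ℕ)) (c : ℕ × ℕ × ℕ → ℂ),
    (∀ t ∈ S, 2 * t.1 + 4 * t.2.1 + 6 * t.2.2 = k ∧ t.1 ≤ p) ∧
    ∀ z ∈ UpperHalf,
      f z = ∑ t ∈ S, c t * Eis 2 z ^ t.1 * Eis 4 z ^ t.2.1 * Eis 6 z ^ t.2.2

/-- `f` satisfies the Hecke eigenform equations of weight `k` on ℍ: for every `n ≥ 1`
there is `λ_n ∈ ℂ` with `T_n^{(k)} f = λ_n f` on the upper half-plane. -/
def IsEigenOn (k : ℤ) (f : ℂ → ℂ) : Prop :=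
  ∀ n : ℕ, 1 ≤ n → ∃ c : ℂ, ∀ z ∈ UpperHalf, hecke k n f z = c * f z

/-- An eigenform of weight `k`: a function that is nonzero on ℍ and satisfies the Hecke
eigenform equations of weight `k`. -/
def IsEigenform (k : ℤ) (f : ℂ → ℂ) : Prop :=
  (∃ z ∈ UpperHalf, f z ≠ 0) ∧ IsEigenOn k f

/-- A holomorphic modular form of weight `k` on `SL₂(ℤ)`: holomorphic on ℍ, satisfying the
weight-`k` modular transformation law, and bounded as `Im z → ∞`. -/
def IsModularForm (k : ℤ) (f : ℂ → ℂ) : Prop :=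
  DifferentiableOn ℂ f UpperHalf ∧
  (∀ a b c d : ℤ, a * d - b * c = 1 → ∀ z ∈ UpperHalf,
      f (((a : ℂ) * z + (b : ℂ)) / ((c : ℂ) * z + (d : ℂ))) =
        ((c : ℂ) * z + (d : ℂ)) ^ k * f z) ∧
  ∃ C : ℝ, ∀ z ∈ UpperHalf, 1 ≤ z.im → ‖f z‖ ≤ C

/-- `f` is a nonzero scalar multiple of `F` (as functions on the upper half-plane). -/
def ScalarOf (f F : ℂ → ℂ) : Prop := ∃ c : ℂ, c ≠ 0 ∧ ∀ z ∈ UpperHalf, f z = c * F z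

/-- The unordered pair `{f, g}` equals `{F, G}` up to nonzero scalar multiples. -/
def UPair (f g F G : ℂ → ℂ) : Prop :=
  (ScalarOf f F ∧ ScalarOf g G) ∨ (ScalarOf f G ∧ ScalarOf g F)

/-! Differentiating term by term, each summand `f((nz + bd)/d²)` of `T_n^{(k)} f` picks up the
inner derivative `n/d²`, and `n^{k-1} d^{-k} · n/d² = n^{-1} · n^{(k+2)-1} d^{-(k+2)}`; hence
`D ∘ T_n^{(k)} = n^{-1} T_n^{(k+2)} ∘ D` on holomorphic functions on ℍ, and the theorem follows by
induction on `m`, since `D` maps holomorphic functions on the open set ℍ to holomorphic ones. -/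

lemma isOpen_upperHalf : IsOpen UpperHalf :=
  isOpen_lt continuous_const Complex.continuous_im

lemma heckeArg_mem_upperHalf {n d : ℕ} (hd : d ∈ n.divisors) (b : ℕ) {z : ℂ}
    (hz : z ∈ UpperHalf) :
    ((n : ℂ) * z + (b : ℂ) * (d : ℂ)) / ((d : ℂ) ^ 2) ∈ UpperHalf := by
  have hn : (0 : ℝ) < n := by exact_mod_cast Nat.pos_of_ne_zero (Nat.mem_divisors.mp hd).2
  have hd : (0 : ℝ) < d := by exact_mod_cast Nat.pos_of_mem_divisors hd
  have hz : 0 < z.im := hz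
  rw [show ((d : ℂ) ^ 2) = ((d ^ 2 : ℝ) : ℂ) by push_cast; ring]
  change 0 < (_ / ((d ^ 2 : ℝ) : ℂ)).im
  rw [Complex.div_ofReal_im]
  simpa using div_pos (mul_pos hn hz) (pow_pos hd 2)

lemma differentiableOn_iterate_Dop {f : ℂ → ℂ} (hf : DifferentiableOn ℂ f UpperHalf) (m : ℕ) :
    DifferentiableOn ℂ (Dop^[m] f) UpperHalf := by
  induction m with
  | zero => exact hf
  | succ m ih =>
    rw [Function.iterate_succ_apply']
    exact (differentiableOn_const _).mul (ih.deriv isOpen_upperHalf)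

lemma Dop_const_mul (c : ℂ) (g : ℂ → ℂ) (z : ℂ) : Dop (fun w => c * g w) z = c * Dop g z := by
  simp only [Dop, deriv_const_mul_field']
  ring

lemma Set.EqOn.Dop {f g : ℂ → ℂ} {s : Set ℂ} (hfg : s.EqOn f g) (hs : IsOpen s) :
    s.EqOn (Dop f) (Dop g) := fun z hz => by
  simp only [_root_.Dop, hfg.deriv hs hz]

lemma hasDerivAt_hecke {f : ℂ → ℂ} (hf : DifferentiableOn ℂ f UpperHalf) (k : ℤ) (n : ℕ)
    {z : ℂ} (hz : z ∈ UpperHalf) :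
    HasDerivAt (hecke k n f)
      ((n : ℂ) ^ (k - 1) * ∑ d ∈ n.divisors, (d : ℂ) ^ (-k) * ∑ b ∈ Finset.range d,
        deriv f (((n : ℂ) * z + (b : ℂ) * (d : ℂ)) / ((d : ℂ) ^ 2)) * ((n : ℂ) / (d : ℂ) ^ 2))
      z := by
  refine .const_mul _ (.fun_sum fun d hd => .const_mul _ (.fun_sum fun b _ => ?_))
  have hf' := hf.differentiableAt (isOpen_upperHalf.mem_nhds (heckeArg_mem_upperHalf hd b hz))
  refine hf'.hasDerivAt.comp z ?_
  simpa using (((hasDerivAt_id z).const_mul (n : ℂ)).add_const ((b : ℂ) * d)).div_const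
    ((d : ℂ) ^ 2)

lemma hecke_weight_factor {n d : ℂ} (hn : n ≠ 0) (hd : d ≠ 0) (k : ℤ) :
    n ^ (k - 1) * d ^ (-k) * (n / d ^ 2) = n⁻¹ * (n ^ (k + 2 - 1) * d ^ (-(k + 2))) := by
  rw [show k + 2 - 1 = k - 1 + 2 by ring, show -(k + 2) = -k + -2 by ring,
    zpow_add₀ hn, zpow_add₀ hd]
  field_simp

lemma Dop_hecke {f : ℂ → ℂ} (hf : DifferentiableOn ℂ f UpperHalf) (k : ℤ) (n : ℕ) {z : ℂ}
    (hz : z ∈ UpperHalf) :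
    Dop (hecke k n f) z = (n : ℂ)⁻¹ * hecke (k + 2) n (Dop f) z := by
  rw [Dop, (hasDerivAt_hecke hf k n hz).deriv, hecke]
  simp only [Dop, Finset.mul_sum]
  refine Finset.sum_congr rfl fun d hd => Finset.sum_congr rfl fun b _ => ?_
  have hn : (n : ℂ) ≠ 0 := Nat.cast_ne_zero.mpr (Nat.mem_divisors.mp hd).2
  have hd : (d : ℂ) ≠ 0 := Nat.cast_ne_zero.mpr (Nat.pos_of_mem_divisors hd).ne'
  linear_combination (1 / (2 * (Real.pi : ℂ) * I) *
      deriv f (((n : ℂ) * z + (b : ℂ) * (d : ℂ)) / ((d : ℂ) ^ 2))) *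
    hecke_weight_factor hn hd k

theorem rankin_cohen_stmt0_general (m : ℕ) (k : ℤ) (n : ℕ) (f : ℂ → ℂ)
    (hf : DifferentiableOn ℂ f UpperHalf) :
    ∀ z ∈ UpperHalf,
      Dop^[m] (hecke k n f) z =
        (n : ℂ) ^ (-(m : ℤ)) * hecke (k + 2 * m) n (Dop^[m] f) z := by
  induction m with
  | zero => simp
  | succ m ih =>
    intro z hz
    rw [Function.iterate_succ_apply', Function.iterate_succ_apply',
      (Set.EqOn.Dop ih isOpen_upperHalf) hz, Dop_const_mul,
      Dop_hecke (differentiableOn_iterate_Dop hf m) _ _ hz]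
    rw [show k + 2 * ((m + 1 : ℕ) : ℤ) = k + 2 * m + 2 by push_cast; ring]
    simp only [zpow_neg, zpow_natCast, pow_succ, mul_inv]
    ring

/-- For every integer `m ≥ 0`, every integer `k`, every `n ≥ 1` and every holomorphic
`f : ℍ → ℂ`, one has `D^m (T_n^{(k)} f) = n^{-m} · T_n^{(k+2m)} (D^m f)` on ℍ. -/
theorem rankin_cohen_stmt0 (m : ℕ) (k : ℤ) (n : ℕ) (hn : 1 ≤ n) (f : ℂ → ℂ)
    (hf : DifferentiableOn ℂ f UpperHalf) :
    ∀ z ∈ UpperHalf,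
      Dop^[m] (hecke k n f) z =
        (n : ℂ) ^ (-(m : ℤ)) * hecke (k + 2 * m) n (Dop^[m] f) z :=
  rankin_cohen_stmt0_general m k n f hf
end
end

section
/- If f = Σ_{n≥1} a_n q^n is a nonzero quasimodular eigenform of weight k on SL₂(ℤ) whose constant Fourier coefficient vanishes, then a_1 ≠ 0. Consequently, if f and g are quasimodular eigenforms of weights k and l, each with vanishing constant Fourier coefficient, then the product fg is not an eigenform of weight k + l. -/
open Complex BigOperators

noncomputable section

/-! The Hecke operator `T_n` acts on `q`-expansions, and the coefficient of `q¹` in `T_n f` is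
`a_n`. Comparing `q`-coefficients in `T_n f = λ_n f` therefore gives `a_n = λ_n a_1` for `n ≥ 1`,
so `a_0 = a_1 = 0` forces `f = 0`. The product of two forms without constant term has vanishing
coefficients of `q⁰` and `q¹`, so it cannot be a (nonzero) eigenform. -/

lemma hasSum_ite_dvd_iff {α : Type*} [AddCommMonoid α] [TopologicalSpace α] {e : ℕ} (he : 0 < e)
    {c : ℕ → α} {s : α} : HasSum (fun M => if e ∣ M then c (M / e) else 0) s ↔ HasSum c s := by
  have hsupp : ∀ M ∉ Set.range (e * ·), (if e ∣ M then c (M / e) else 0) = 0 := by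
    rintro M hM
    rw [if_neg]
    rintro ⟨m, rfl⟩
    exact hM ⟨m, rfl⟩
  rw [← (mul_right_injective₀ he.ne').hasSum_iff hsupp]
  simp [Function.comp_def, Nat.mul_div_cancel_left _ he]

lemma IsPrimitiveRoot.sum_range_pow_pow {R : Type*} [CommRing R] [IsDomain R] {ζ : R} {d : ℕ}
    (hζ : IsPrimitiveRoot ζ d) (m : ℕ) :
    ∑ b ∈ Finset.range d, (ζ ^ m) ^ b = if d ∣ m then (d : R) else 0 := by
  split_ifs with hdm
  · simp [(hζ.pow_eq_one_iff_dvd m).mpr hdm]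
  · have hne : ζ ^ m - 1 ≠ 0 := sub_ne_zero.mpr fun h => hdm ((hζ.pow_eq_one_iff_dvd m).mp h)
    refine mul_left_cancel₀ hne ?_
    rw [mul_geom_sum, ← pow_mul, mul_comm, pow_mul, hζ.pow_eq_one, one_pow, sub_self, mul_zero]

def HasQExpansion (a : ℕ → ℂ) (f : ℂ → ℂ) : Prop :=
  ∀ z ∈ UpperHalf, HasSum (fun n : ℕ => a n * Complex.exp (2 * (Real.pi : ℂ) * I * z) ^ n) (f z)

-- The classical `Σ_{e ∣ (n, M)} e^{k-1} a_{nM/e²}`, indexed by the codivisor `d = n / e`.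
def heckeCoeff (k : ℤ) (n : ℕ) (a : ℕ → ℂ) (M : ℕ) : ℂ :=
  (n : ℂ) ^ (k - 1) * ∑ d ∈ n.divisors, (d : ℂ) ^ (-k) *
    (if n / d ∣ M then (d : ℂ) * a (d * (M / (n / d))) else 0)

lemma heckeCoeff_one (k : ℤ) {n : ℕ} (hn : n ≠ 0) (a : ℕ → ℂ) : heckeCoeff k n a 1 = a n := by
  have hnC : (n : ℂ) ≠ 0 := Nat.cast_ne_zero.mpr hn
  rw [heckeCoeff, Finset.sum_eq_single_of_mem n (Nat.mem_divisors_self n hn)]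
  · rw [Nat.div_self (Nat.pos_of_ne_zero hn), if_pos (one_dvd 1), Nat.div_one, mul_one,
      ← mul_assoc, ← mul_assoc, ← zpow_add₀ hnC, ← zpow_add_one₀ hnC,
      show k - 1 + -k + 1 = 0 by ring, zpow_zero, one_mul]
  · intro d hd hdn
    have hcodivisor : ¬ n / d ∣ 1 := by
      rw [Nat.dvd_one]
      exact fun h => hdn (by rw [← Nat.div_mul_cancel (Nat.dvd_of_mem_divisors hd), h, one_mul])
    rw [if_neg hcodivisor, mul_zero]

open Finset.HasAntidiagonal (antidiagonal mem_antidiagonal)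

namespace HasQExpansion

variable {a b : ℕ → ℂ} {f g : ℂ → ℂ}

lemma congr (ha : HasQExpansion a f) (hfg : ∀ z ∈ UpperHalf, f z = g z) : HasQExpansion a g :=
  fun z hz => hfg z hz ▸ ha z hz

lemma const_mul (ha : HasQExpansion a f) (c : ℂ) :
    HasQExpansion (fun n => c * a n) (fun z => c * f z) :=
  fun z hz => by simpa only [mul_assoc] using (ha z hz).mul_left c

lemma sub (ha : HasQExpansion a f) (hb : HasQExpansion b g) : HasQExpansion (a - b) (f - g) :=
  fun z hz => by simpa only [Pi.sub_apply, sub_mul] using (ha z hz).sub (hb z hz)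

lemma mul (ha : HasQExpansion a f) (hb : HasQExpansion b g) :
    HasQExpansion (fun M => ∑ ij ∈ antidiagonal M, a ij.1 * b ij.2) (fun z => f z * g z) := by
  intro z hz
  set q := Complex.exp (2 * (Real.pi : ℂ) * I * z)
  have hna : Summable fun m => ‖a m * q ^ m‖ := summable_norm_iff.mpr (ha z hz).summable
  have hnb : Summable fun m => ‖b m * q ^ m‖ := summable_norm_iff.mpr (hb z hz).summable
  have hterm : ∀ M, ∑ ij ∈ antidiagonal M, (a ij.1 * q ^ ij.1) * (b ij.2 * q ^ ij.2)
      = (∑ ij ∈ antidiagonal M, a ij.1 * b ij.2) * q ^ M := by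
    intro M
    rw [Finset.sum_mul]
    refine Finset.sum_congr rfl fun ij hij => ?_
    rw [← mem_antidiagonal.mp hij, pow_add]
    ring
  have hcauchy := (summable_norm_sum_mul_antidiagonal_of_summable_norm hna hnb).of_norm.hasSum
  rw [← tsum_mul_tsum_eq_tsum_sum_antidiagonal_of_summable_norm hna hnb, (ha z hz).tsum_eq,
    (hb z hz).tsum_eq] at hcauchy
  simpa only [hterm] using hcauchy

lemma eq_zero_of_eqOn_zero (ha : HasQExpansion a f) (hf : ∀ z ∈ UpperHalf, f z = 0) : a = 0 := by
  have hzero : ∀ τ : UpperHalfPlane,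
      HasSum (fun m => a m • Function.Periodic.qParam 1 τ ^ m) 0 := by
    intro τ
    simpa [Function.Periodic.qParam, hf τ τ.im_pos] using ha τ τ.im_pos
  funext m
  simpa [UpperHalfPlane.qExpansion_zero] using
    UpperHalfPlane.qExpansion_coeff_unique (F := C(UpperHalfPlane, ℂ)) 0 one_pos
      (UpperHalfPlane.analyticAt_cuspFunction_zero one_pos (fun _ => rfl)
        mdifferentiable_const UpperHalfPlane.zero_form_isBoundedAtImInfty) hzero m

-- `q((ez + b)/d) = q(z)^{e/d} ζ^b` with `ζ = e^{2πi/d}`, and summing over `b` keeps exactly the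
-- exponents divisible by `d`.
lemma hasSum_sum_translates (ha : HasQExpansion a f) {d e : ℕ} (hd : 0 < d) (he : 0 < e) {z : ℂ}
    (hz : z ∈ UpperHalf) :
    HasSum (fun M : ℕ => (if e ∣ M then (d : ℂ) * a (d * (M / e)) else 0) *
        Complex.exp (2 * (Real.pi : ℂ) * I * z) ^ M)
      (∑ b ∈ Finset.range d, f ((e * z + b) / d)) := by
  have hdC : (d : ℂ) ≠ 0 := Nat.cast_ne_zero.mpr hd.ne'
  set q := Complex.exp (2 * (Real.pi : ℂ) * I * z)
  set A := Complex.exp (2 * (Real.pi : ℂ) * I * (e * z / d))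
  set ζ := Complex.exp (2 * (Real.pi : ℂ) * I / d)
  have hw : ∀ b : ℕ, ((e : ℂ) * z + b) / d ∈ UpperHalf := fun b => by
    show 0 < (((e : ℂ) * z + b) / d).im
    simp only [Complex.div_natCast_im, Complex.add_im, Complex.mul_im, Complex.natCast_re,
      Complex.natCast_im, zero_mul, add_zero]
    exact div_pos (mul_pos (Nat.cast_pos.mpr he) hz) (Nat.cast_pos.mpr hd)
  have hqw : ∀ b : ℕ,
      Complex.exp (2 * (Real.pi : ℂ) * I * (((e : ℂ) * z + b) / d)) = A * ζ ^ b := by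
    intro b
    rw [← Complex.exp_nat_mul, ← Complex.exp_add]
    congr 1
    field_simp
  have hsum : HasSum (fun m => ∑ b ∈ Finset.range d, a m * (A * ζ ^ b) ^ m)
      (∑ b ∈ Finset.range d, f ((e * z + b) / d)) :=
    hasSum_sum fun b _ => hqw b ▸ ha _ (hw b)
  have hinner : ∀ m, ∑ b ∈ Finset.range d, a m * (A * ζ ^ b) ^ m
      = if d ∣ m then (d : ℂ) * a m * A ^ m else 0 := by
    intro m
    have hterm : ∀ b, a m * (A * ζ ^ b) ^ m = a m * A ^ m * (ζ ^ m) ^ b := fun b => by ring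
    simp_rw [hterm]
    rw [← Finset.mul_sum, (Complex.isPrimitiveRoot_exp d hd.ne').sum_range_pow_pow m]
    split_ifs <;> ring
  have hAq : ∀ m, A ^ (d * m) = q ^ (e * m) := by
    intro m
    rw [← Complex.exp_nat_mul, ← Complex.exp_nat_mul]
    congr 1
    push_cast
    field_simp
  have hmultiples : HasSum (fun m => (d : ℂ) * a (d * m) * q ^ (e * m))
      (∑ b ∈ Finset.range d, f ((e * z + b) / d)) := by
    rw [← hasSum_ite_dvd_iff hd]
    convert hsum using 2 with m
    rw [hinner]
    split_ifs with hdm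
    · obtain ⟨m, rfl⟩ := hdm
      rw [Nat.mul_div_cancel_left _ hd, hAq]
    · rfl
  rw [← hasSum_ite_dvd_iff he] at hmultiples
  convert hmultiples using 2 with M
  split_ifs with heM
  · obtain ⟨M, rfl⟩ := heM
    rw [Nat.mul_div_cancel_left _ he]
  · exact zero_mul _

lemma hecke (ha : HasQExpansion a f) (k : ℤ) (n : ℕ) :
    HasQExpansion (heckeCoeff k n a) (hecke k n f) := by
  intro z hz
  have hdivisor : ∀ d ∈ n.divisors, HasSum
      (fun M : ℕ => (d : ℂ) ^ (-k) *
        ((if n / d ∣ M then (d : ℂ) * a (d * (M / (n / d))) else 0) *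
          Complex.exp (2 * (Real.pi : ℂ) * I * z) ^ M))
      ((d : ℂ) ^ (-k) * ∑ b ∈ Finset.range d, f (((n : ℂ) * z + b * d) / d ^ 2)) := by
    intro d hd
    obtain ⟨⟨e, rfl⟩, hn⟩ := Nat.mem_divisors.mp hd
    have hd0 : 0 < d := Nat.pos_of_ne_zero (left_ne_zero_of_mul hn)
    have he0 : 0 < e := Nat.pos_of_ne_zero (right_ne_zero_of_mul hn)
    have hdC : (d : ℂ) ≠ 0 := Nat.cast_ne_zero.mpr hd0.ne'
    have harg : ∀ b : ℕ, (((d * e : ℕ) : ℂ) * z + b * d) / d ^ 2 = (e * z + b) / d := by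
      intro b
      push_cast
      field_simp
    simp_rw [harg, Nat.mul_div_cancel_left _ hd0]
    exact (ha.hasSum_sum_translates hd0 he0 hz).mul_left _
  convert (hasSum_sum hdivisor).mul_left ((n : ℂ) ^ (k - 1)) using 1
  · rfl
  · ext M
    simp only [heckeCoeff, Finset.sum_mul, mul_assoc]
  · rfl

end HasQExpansion

lemma IsEigenOn.coeff_eq_mul_coeff_one {k : ℤ} {a : ℕ → ℂ} {f : ℂ → ℂ} (hf : IsEigenOn k f)
    (ha : HasQExpansion a f) {n : ℕ} (hn : 1 ≤ n) : ∃ c : ℂ, a n = c * a 1 := by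
  obtain ⟨c, hc⟩ := hf n hn
  have hTf : HasQExpansion (fun m => c * a m) (hecke k n f) :=
    (ha.const_mul c).congr fun z hz => (hc z hz).symm
  have hcoeff : heckeCoeff k n a = fun m => c * a m :=
    sub_eq_zero.mp (((ha.hecke k n).sub hTf).eq_zero_of_eqOn_zero fun z _ => sub_self _)
  exact ⟨c, heckeCoeff_one k (Nat.one_le_iff_ne_zero.mp hn) a ▸ congrFun hcoeff 1⟩

lemma IsEigenform.coeff_one_ne_zero {k : ℤ} {a : ℕ → ℂ} {f : ℂ → ℂ} (hf : IsEigenform k f)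
    (ha : HasQExpansion a f) (ha0 : a 0 = 0) : a 1 ≠ 0 := by
  intro ha1
  have hzero : a = 0 := by
    funext n
    rcases Nat.eq_zero_or_pos n with rfl | hn
    · exact ha0
    · obtain ⟨c, hc⟩ := hf.2.coeff_eq_mul_coeff_one ha hn
      rw [hc, ha1, mul_zero, Pi.zero_apply]
  obtain ⟨z, hz, hfz⟩ := hf.1
  exact hfz ((ha z hz).unique (by simp [hzero]))

theorem rankin_cohen_stmt6_general (k : ℕ) (f : ℂ → ℂ) (a : ℕ → ℂ)
    (hfe : IsEigenform (k : ℤ) f)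
    (ha : ∀ z ∈ UpperHalf,
      HasSum (fun n : ℕ => a n * Complex.exp (2 * (Real.pi : ℂ) * I * z) ^ n) (f z))
    (ha0 : a 0 = 0) :
    a 1 ≠ 0 ∧
    ∀ (l : ℕ) (g : ℂ → ℂ) (b : ℕ → ℂ), IsQuasimodular l g → IsEigenform (l : ℤ) g →
      (∀ z ∈ UpperHalf,
        HasSum (fun n : ℕ => b n * Complex.exp (2 * (Real.pi : ℂ) * I * z) ^ n) (g z)) →
      b 0 = 0 →
      ¬ IsEigenform ((k : ℤ) + l) (fun z => f z * g z) := by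
  refine ⟨hfe.coeff_one_ne_zero ha ha0, fun l g b _ _ hb hb0 hfg => ?_⟩
  refine hfg.coeff_one_ne_zero (HasQExpansion.mul ha hb) (by simp [ha0]) ?_
  simp [Finset.Nat.antidiagonal_succ, ha0, hb0]

/-- If `f = Σ_{n≥1} a_n q^n` is a nonzero quasimodular eigenform of weight `k` with vanishing
constant Fourier coefficient, then `a_1 ≠ 0`; consequently, the product of two quasimodular
eigenforms with vanishing constant Fourier coefficients is not an eigenform. -/
theorem rankin_cohen_stmt6 (k : ℕ) (f : ℂ → ℂ) (a : ℕ → ℂ)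
    (hfq : IsQuasimodular k f) (hfe : IsEigenform (k : ℤ) f)
    (ha : ∀ z ∈ UpperHalf,
      HasSum (fun n : ℕ => a n * Complex.exp (2 * (Real.pi : ℂ) * I * z) ^ n) (f z))
    (ha0 : a 0 = 0) :
    a 1 ≠ 0 ∧
    ∀ (l : ℕ) (g : ℂ → ℂ) (b : ℕ → ℂ), IsQuasimodular l g → IsEigenform (l : ℤ) g →
      (∀ z ∈ UpperHalf,
        HasSum (fun n : ℕ => b n * Complex.exp (2 * (Real.pi : ℂ) * I * z) ^ n) (g z)) →
      b 0 = 0 →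
      ¬ IsEigenform ((k : ℤ) + l) (fun z => f z * g z) :=
  rankin_cohen_stmt6_general k f a hfe ha ha0
end
end

section
/- The weight 4 quasimodular form E_2² is not an eigenform: there is no sequence (λ_n)_{n≥1} of complex numbers such that T_n^{(4)}(E_2²) = λ_n · E_2² for all n ≥ 1. -/
open Complex BigOperators

noncomputable section

/-!
In the variable `q = e^{2πiz}` one has `E_2 = 1 - 24 ∑ σ_1(n) qⁿ`, so that
`E_2² = G(q)` with `G(q) = 1 - 48 q + 432 q² + O(q³)`. Evaluating `T_2^{(4)}` at the point
whose `q`-parameter is `w²` turns the eigen-equation into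
`8 G(w⁴) + G(w)/2 + G(-w)/2 = λ₂ G(w²)` for all small `w ≠ 0`. The constant terms force
`λ₂ = 9`, and then the `w²` terms read `432 = -48 λ₂`, a contradiction.
-/

open Filter Asymptotics Topology

namespace Asymptotics

variable {𝕜 E : Type*} [NontriviallyNormedField 𝕜] [NormedAddCommGroup E]

lemma isBigO_pow_pow_of_le {m n : ℕ} (h : m ≤ n) :
    (fun x : 𝕜 => x ^ n) =O[𝓝 0] fun x => x ^ m := by
  rcases h.eq_or_lt with rfl | hlt
  · exact isBigO_refl _ _
  · exact (isLittleO_pow_pow hlt).isBigO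

lemma IsBigO.comp_pow_of_ne_zero {f : 𝕜 → E} {k n : ℕ} (hf : f =O[𝓝 0] fun q => q ^ k)
    (hn : n ≠ 0) : (fun w => f (w ^ n)) =O[𝓝 0] fun w => w ^ k := by
  have hpow : Tendsto (fun w : 𝕜 => w ^ n) (𝓝 0) (𝓝 0) := by
    simpa [zero_pow hn] using (continuous_pow n).tendsto (0 : 𝕜)
  refine (hf.comp_tendsto hpow).trans ?_
  simp only [Function.comp_def, ← pow_mul]
  exact isBigO_pow_pow_of_le (Nat.le_mul_of_pos_left k (Nat.pos_of_ne_zero hn))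

lemma IsBigO.comp_neg_pow {f : 𝕜 → E} {k : ℕ} (hf : f =O[𝓝 0] fun q => q ^ k) :
    (fun w => f (-w)) =O[𝓝 0] fun w => w ^ k := by
  have hneg : Tendsto (fun w : 𝕜 => -w) (𝓝 0) (𝓝 0) := by
    simpa using (continuous_neg (G := 𝕜)).tendsto 0
  refine (hf.comp_tendsto hneg).trans (IsBigO.of_bound 1 (Eventually.of_forall fun w => ?_))
  simp

lemma eq_zero_of_add_mul_sq_isBigO {a b : 𝕜}
    (h : (fun w => a + b * w ^ 2) =O[𝓝[≠] 0] fun w => w ^ 3) : a = 0 ∧ b = 0 := by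
  have hcube : Tendsto (fun w : 𝕜 => w ^ 3) (𝓝[≠] 0) (𝓝 0) := by
    simpa using ((continuous_pow 3).tendsto (0 : 𝕜)).mono_left nhdsWithin_le_nhds
  have hlim : Tendsto (fun w : 𝕜 => a + b * w ^ 2) (𝓝[≠] 0) (𝓝 a) := by
    simpa using ((show Continuous fun w : 𝕜 => a + b * w ^ 2 by fun_prop).tendsto 0).mono_left
      nhdsWithin_le_nhds
  have ha : a = 0 := tendsto_nhds_unique hlim (h.trans_tendsto hcube)
  subst ha
  simp only [zero_add] at h
  have hb : (fun _ => b) =O[𝓝[≠] 0] fun w : 𝕜 => w := by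
    refine (h.mul (isBigO_refl (fun w : 𝕜 => (w ^ 2)⁻¹) _)).congr' ?_ ?_ <;>
      filter_upwards [self_mem_nhdsWithin] with w (hw : w ≠ 0) <;> field_simp
  have hid : Tendsto (fun w : 𝕜 => w) (𝓝[≠] 0) (𝓝 0) :=
    tendsto_nhdsWithin_of_tendsto_nhds tendsto_id
  exact ⟨rfl, tendsto_nhds_unique tendsto_const_nhds (hb.trans_tendsto hid)⟩

end Asymptotics

lemma sigmaFn_one_le_sq (n : ℕ) : sigmaFn 1 n ≤ n ^ 2 := by
  simpa [sigmaFn, ArithmeticFunction.sigma_apply] using ArithmeticFunction.sigma_le_pow_succ 1 n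

def sigmaOneSeries : FormalMultilinearSeries ℂ ℂ ℂ :=
  FormalMultilinearSeries.ofScalars ℂ (fun n => (sigmaFn 1 n : ℂ))

lemma sigmaOneSeries_radius_pos : 0 < sigmaOneSeries.radius := by
  have hbound : (fun n => ‖sigmaOneSeries n‖ * ((1 / 2 : NNReal) : ℝ) ^ n) =O[atTop]
      (fun n => (n : ℝ) ^ 2 * (1 / 2 : ℝ) ^ n) := by
    refine IsBigO.of_bound 1 (Eventually.of_forall fun n => ?_)
    have hσ : (sigmaFn 1 n : ℝ) ≤ (n : ℝ) ^ 2 := by exact_mod_cast sigmaFn_one_le_sq n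
    simp only [sigmaOneSeries, FormalMultilinearSeries.ofScalars_norm, Complex.norm_natCast,
      NNReal.coe_div, NNReal.coe_one, NNReal.coe_ofNat, one_mul, Real.norm_eq_abs]
    rw [abs_of_nonneg (by positivity), abs_of_nonneg (by positivity)]
    gcongr
  have hdecay := tendsto_pow_const_mul_const_pow_of_abs_lt_one 2 (by norm_num : |(1 / 2 : ℝ)| < 1)
  have hr := sigmaOneSeries.le_radius_of_isBigO (hbound.trans (hdecay.isBigO_one ℝ))
  exact lt_of_lt_of_le (by norm_num) hr

lemma hasFPowerSeriesAt_sigmaOneSeries_sum :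
    HasFPowerSeriesAt sigmaOneSeries.sum sigmaOneSeries 0 :=
  (sigmaOneSeries.hasFPowerSeriesOnBall sigmaOneSeries_radius_pos).hasFPowerSeriesAt

lemma sigmaOneSeries_sum_sub_isBigO :
    (fun q => sigmaOneSeries.sum q - (q + 3 * q ^ 2)) =O[𝓝 0] (fun q => q ^ 3) := by
  have h := hasFPowerSeriesAt_sigmaOneSeries_sum.isBigO_sub_partialSum_pow 3
  have hpartial : ∀ q : ℂ, sigmaOneSeries.partialSum 3 q = q + 3 * q ^ 2 := by
    intro q
    have h0 : sigmaFn 1 0 = 0 := by decide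
    have h1 : sigmaFn 1 1 = 1 := by decide
    have h2 : sigmaFn 1 2 = 3 := by decide
    simp [FormalMultilinearSeries.partialSum, sigmaOneSeries, Finset.sum_range_succ, h0, h1, h2]
    ring
  simp only [zero_add, hpartial, ← norm_pow] at h
  exact h.of_norm_right

def eisTwoQ (q : ℂ) : ℂ := 1 - 24 * sigmaOneSeries.sum q

lemma Eis_two_eq_eisTwoQ (z : ℂ) :
    Eis 2 z = eisTwoQ (Complex.exp (2 * (Real.pi : ℂ) * I * z)) := by
  have hB : ((bernoulli 2 : ℚ) : ℂ) = 1 / 6 := by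
    rw [bernoulli_eq_bernoulli'_of_ne_one (by norm_num), bernoulli'_two]
    norm_num
  have hshift : ∀ q : ℂ,
      ∑' m : ℕ, (sigmaFn 1 (m + 1) : ℂ) * q ^ (m + 1) = sigmaOneSeries.sum q := by
    intro q
    have h0 : sigmaFn 1 0 = 0 := by decide
    refine (Nat.succ_injective.tsum_eq (f := fun n => (sigmaFn 1 n : ℂ) * q ^ n) ?_).trans ?_
    · intro n hn
      cases n with
      | zero => simp [h0] at hn
      | succ n => exact ⟨n, rfl⟩
    · simp [FormalMultilinearSeries.sum, sigmaOneSeries, mul_comm]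
  simp only [Eis, eisTwoQ, hB, Nat.cast_ofNat, ← hshift]
  norm_num

lemma continuousAt_eisTwoQ : ContinuousAt eisTwoQ 0 :=
  continuousAt_const.sub (continuousAt_const.mul hasFPowerSeriesAt_sigmaOneSeries_sum.continuousAt)

lemma eisTwoQ_sq_sub_isBigO :
    (fun q => eisTwoQ q ^ 2 - (1 - 48 * q + 432 * q ^ 2)) =O[𝓝 0] (fun q => q ^ 3) := by
  set R := fun q => sigmaOneSeries.sum q - (q + 3 * q ^ 2)
  set e := fun q : ℂ => 1 - 24 * q - 72 * q ^ 2
  have hsplit : (fun q => eisTwoQ q ^ 2 - (1 - 48 * q + 432 * q ^ 2)) =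
      fun q => -24 * (R q * (eisTwoQ q + e q)) + q ^ 3 * (3456 + 5184 * q) := by
    funext q
    simp only [R, e, eisTwoQ]
    ring
  have hbdd : (fun q => eisTwoQ q + e q) =O[𝓝 0] (fun _ => (1 : ℂ)) :=
    ((continuousAt_eisTwoQ.add (by fun_prop)).tendsto).isBigO_one ℂ
  have hpoly : (fun q : ℂ => 3456 + 5184 * q) =O[𝓝 0] (fun _ => (1 : ℂ)) :=
    ((show Continuous fun q : ℂ => 3456 + 5184 * q by fun_prop).tendsto 0).isBigO_one ℂ
  rw [hsplit]
  simpa using ((sigmaOneSeries_sum_sub_isBigO.mul hbdd).const_mul_left (-24)).add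
    ((isBigO_refl (fun q : ℂ => q ^ 3) _).mul hpoly)

lemma hecke_four_two_apply (f : ℂ → ℂ) (z : ℂ) :
    hecke 4 2 f z = 8 * f (2 * z) + f (z / 2) / 2 + f ((z + 1) / 2) / 2 := by
  have hdiv : Nat.divisors 2 = {1, 2} := by decide
  simp only [hecke, hdiv, Finset.sum_insert (by decide : 1 ∉ ({2} : Finset ℕ)),
    Finset.sum_singleton, Finset.sum_range_succ, Finset.sum_range_zero]
  norm_num
  rw [show 2 * z / 4 = z / 2 by ring, show (2 * z + 2) / 4 = (z + 1) / 2 by ring]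
  ring

def qLog (w : ℂ) : ℂ := Complex.log w / (2 * (Real.pi : ℂ) * I)

lemma exp_two_pi_I_mul_natCast_mul_qLog {w : ℂ} (hw : w ≠ 0) (n : ℕ) :
    Complex.exp (2 * (Real.pi : ℂ) * I * (n * qLog w)) = w ^ n := by
  have hπ : (2 * (Real.pi : ℂ) * I : ℂ) ≠ 0 := by simp [Real.pi_ne_zero]
  have harg : 2 * (Real.pi : ℂ) * I * (n * qLog w) = n * Complex.log w := by
    rw [qLog]
    field_simp
  rw [harg, Complex.exp_nat_mul, Complex.exp_log hw]

lemma exp_two_pi_I_mul_qLog_add_half {w : ℂ} (hw : w ≠ 0) :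
    Complex.exp (2 * (Real.pi : ℂ) * I * (qLog w + 1 / 2)) = -w := by
  have h := exp_two_pi_I_mul_natCast_mul_qLog hw 1
  rw [Nat.cast_one, one_mul, pow_one] at h
  rw [mul_add, Complex.exp_add, h, show 2 * (Real.pi : ℂ) * I * (1 / 2) =
    Real.pi * I by ring, Complex.exp_pi_mul_I]
  ring

lemma im_qLog_pos {w : ℂ} (hw0 : w ≠ 0) (hw1 : ‖w‖ < 1) : 0 < (qLog w).im := by
  have hlog : Real.log ‖w‖ < 0 := Real.log_neg (norm_pos_iff.2 hw0) hw1
  have hIm : (qLog w).im = -Real.log ‖w‖ / (2 * Real.pi) := by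
    simp [qLog, Complex.div_im, Complex.log_re]
    field_simp
  rw [hIm]
  exact div_pos (neg_pos.2 hlog) (by positivity)

lemma hecke_four_two_comp_exp (F : ℂ → ℂ) {w : ℂ} (hw : w ≠ 0) :
    hecke 4 2 (fun z => F (Complex.exp (2 * (Real.pi : ℂ) * I * z))) (2 * qLog w) =
      8 * F (w ^ 4) + F w / 2 + F (-w) / 2 := by
  have h4 := exp_two_pi_I_mul_natCast_mul_qLog hw 4
  have h1 := exp_two_pi_I_mul_natCast_mul_qLog hw 1
  push_cast at h4 h1
  rw [hecke_four_two_apply, show 2 * (2 * qLog w) = 4 * qLog w by ring,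
    show 2 * qLog w / 2 = 1 * qLog w by ring, show (2 * qLog w + 1) / 2 = qLog w + 1 / 2 by ring,
    h4, h1, pow_one, exp_two_pi_I_mul_qLog_add_half hw]

lemma eisTwoQ_sq_relation_of_hecke_two {c : ℂ}
    (h : ∀ z ∈ UpperHalf, hecke 4 2 (fun w => Eis 2 w * Eis 2 w) z = c * (Eis 2 z * Eis 2 z))
    {w : ℂ} (hw0 : w ≠ 0) (hw1 : ‖w‖ < 1) :
    8 * eisTwoQ (w ^ 4) ^ 2 + eisTwoQ w ^ 2 / 2 + eisTwoQ (-w) ^ 2 / 2 =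
      c * eisTwoQ (w ^ 2) ^ 2 := by
  have hz : 2 * qLog w ∈ UpperHalf := by
    simpa [UpperHalf] using im_qLog_pos hw0 hw1
  have hsq : (fun z => Eis 2 z * Eis 2 z) =
      fun z => eisTwoQ (Complex.exp (2 * (Real.pi : ℂ) * I * z)) ^ 2 := by
    funext z
    rw [Eis_two_eq_eisTwoQ, sq]
  have hT := hecke_four_two_comp_exp (fun q => eisTwoQ q ^ 2) hw0
  beta_reduce at hT
  have h2 := h _ hz
  rw [hsq, hT] at h2
  have hq := exp_two_pi_I_mul_natCast_mul_qLog hw0 2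
  push_cast at hq
  rw [h2, ← sq, Eis_two_eq_eisTwoQ, hq]

lemma isBigO_of_eisTwoQ_sq_relation {c : ℂ}
    (hrel : ∀ᶠ w in 𝓝[≠] 0, 8 * eisTwoQ (w ^ 4) ^ 2 + eisTwoQ w ^ 2 / 2 +
      eisTwoQ (-w) ^ 2 / 2 = c * eisTwoQ (w ^ 2) ^ 2) :
    (fun w => (9 - c) + (432 + 48 * c) * w ^ 2) =O[𝓝[≠] 0] fun w => w ^ 3 := by
  set A := fun q => eisTwoQ q ^ 2 - (1 - 48 * q + 432 * q ^ 2)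
  have hA : A =O[𝓝 0] fun q => q ^ 3 := eisTwoQ_sq_sub_isBigO
  have hpoly : (fun w : ℂ => (384 + 432 * c) * w ^ 4 - 3456 * w ^ 8) =O[𝓝 0] fun w => w ^ 3 :=
    ((isBigO_pow_pow_of_le (by norm_num)).const_mul_left _).sub
      ((isBigO_pow_pow_of_le (by norm_num)).const_mul_left _)
  -- With `g(q) = 1 - 48 q + 432 q²`, `8 g(w⁴) + g(w)/2 + g(-w)/2 - c g(w²)` equals
  -- `(9 - c) + (432 + 48c) w² - (384 + 432c) w⁴ + 3456 w⁸`.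
  have hrest := ((((hA.comp_pow_of_ne_zero four_ne_zero).const_mul_left 8).add
    ((hA.const_mul_left (1 / 2)).add (hA.comp_neg_pow.const_mul_left (1 / 2)))).sub
    ((hA.comp_pow_of_ne_zero two_ne_zero).const_mul_left c)).neg_left.add hpoly
  refine (hrest.mono nhdsWithin_le_nhds).congr' ?_ EventuallyEq.rfl
  filter_upwards [hrel] with w hw
  simp only [A]
  linear_combination -hw

/-- The weight 4 quasimodular form `E_2²` is not an eigenform: there is no sequence
`(λ_n)_{n≥1}` of complex numbers with `T_n^{(4)}(E_2²) = λ_n · E_2²` for all `n ≥ 1`. -/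
theorem rankin_cohen_stmt11 :
    ¬ ∃ lam : ℕ → ℂ, ∀ n : ℕ, 1 ≤ n → ∀ z ∈ UpperHalf,
      hecke 4 n (fun w => Eis 2 w * Eis 2 w) z = lam n * (Eis 2 z * Eis 2 z) := by
  rintro ⟨lam, hlam⟩
  have hrel : ∀ᶠ w in 𝓝[≠] 0, 8 * eisTwoQ (w ^ 4) ^ 2 + eisTwoQ w ^ 2 / 2 +
      eisTwoQ (-w) ^ 2 / 2 = lam 2 * eisTwoQ (w ^ 2) ^ 2 := by
    filter_upwards [self_mem_nhdsWithin,
      nhdsWithin_le_nhds (Metric.ball_mem_nhds (0 : ℂ) one_pos)] with w hw0 hw1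
    exact eisTwoQ_sq_relation_of_hecke_two (hlam 2 one_le_two) hw0 (mem_ball_zero_iff.1 hw1)
  obtain ⟨h0, h2⟩ := eq_zero_of_add_mul_sq_isBigO (isBigO_of_eisTwoQ_sq_relation hrel)
  have : (864 : ℂ) = 0 := by linear_combination 48 * h0 + h2
  norm_num at this
end
end

section
/- Let k_1, k_2 ≥ 1 and m ≥ 0 be integers, let g, h : ℍ → ℂ be holomorphic functions, and let γ ∈ SL₂(ℝ). Then [g, h]_m |_{k_1+k_2+2m} γ = [ g|_{k_1}γ , h|_{k_2}γ ]_m. -/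
open Complex BigOperators

noncomputable section

/-- The weight-`k` slash action of `γ = (a b; c d) ∈ SL₂(ℝ)`:
`(f|_k γ)(z) = (cz+d)^{−k} f((az+b)/(cz+d))`. -/
def slashAct (k : ℤ) (f : ℂ → ℂ) (a b c d : ℝ) : ℂ → ℂ := fun z =>
  ((c : ℂ) * z + (d : ℂ)) ^ (-k) * f (((a : ℂ) * z + (b : ℂ)) / ((c : ℂ) * z + (d : ℂ)))

/-- The `m`-th Rankin–Cohen bracket of `g`, `h` in weights `k₁`, `k₂`:
`[g, h]_m(z) = Σ_{r+s=m} (−1)^r C(m+k₁−1, s) C(m+k₂−1, r) (D^r g)(z) (D^s h)(z)`. -/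
def RCbracket (k₁ k₂ m : ℕ) (g h : ℂ → ℂ) : ℂ → ℂ := fun z =>
  ∑ r ∈ Finset.range (m + 1),
    (-1 : ℂ) ^ r * ((m + k₁ - 1).choose (m - r) : ℂ) * ((m + k₂ - 1).choose r : ℂ) *
      Dop^[r] g z * Dop^[m - r] h z

/-!
Write `u = (cz+d)⁻¹` and `E = -c/(2πi)`. Induction on `n` gives
`Dⁿ(f|_k γ)(z) = Σ_j C(n,j) (k+j)⋯(k+n-1) Eⁿ⁻ʲ u^(k+n+j) (Dʲf)(γz)`.
For the Cohen–Kuznetsov series `f̃(X) = Σ Dⁿf Xⁿ / (n! (k+n-1)!)` this says that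
`(f|_k γ)~(X) = u^k e^(EuX) f̃(u²X)`, while `[g,h]_m` is `(m+k₁-1)! (m+k₂-1)!` times the
coefficient of `X^m` in `g̃(-X) h̃(X)`. In this product the factors `e^(-EuX)` and `e^(EuX)`
cancel, and the substitution `X ↦ u²X` turns into the factor `u^(k₁+k₂+2m)`.
-/

namespace RankinCohen

open Nat PowerSeries

def slashCoeff (k n j : ℕ) : ℕ := n.choose j * (k + j).ascFactorial (n - j)

lemma slashCoeff_self (k n : ℕ) : slashCoeff k n n = 1 := by
  simp [slashCoeff]

lemma slashCoeff_of_lt (k : ℕ) {n j : ℕ} (h : n < j) : slashCoeff k n j = 0 := by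
  simp [slashCoeff, Nat.choose_eq_zero_of_lt h]

lemma slashCoeff_succ_zero (k n : ℕ) : slashCoeff k (n + 1) 0 = (k + n) * slashCoeff k n 0 := by
  simp [slashCoeff, Nat.ascFactorial_succ]

lemma slashCoeff_succ_succ (k n j : ℕ) :
    slashCoeff k (n + 1) (j + 1) = slashCoeff k n j + (k + n + j + 1) * slashCoeff k n (j + 1) := by
  rcases lt_or_ge n j with hnj | hjn
  · simp [slashCoeff_of_lt k hnj, slashCoeff_of_lt k (show n < j + 1 by omega),
      slashCoeff_of_lt k (show n + 1 < j + 1 by omega)]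
  obtain ⟨t, rfl⟩ := Nat.exists_eq_add_of_le hjn
  rcases t with _ | s
  · simp [slashCoeff_self, slashCoeff_of_lt k (Nat.lt_succ_self j)]
  simp only [slashCoeff, show j + (s + 1) + 1 - (j + 1) = s + 1 by omega,
    show j + (s + 1) - j = s + 1 by omega, show j + (s + 1) - (j + 1) = s by omega]
  have hasc : (k + j).ascFactorial (s + 1) = (k + j) * (k + j + 1).ascFactorial s := by
    rw [Nat.ascFactorial_succ, ← Nat.succ_ascFactorial]
  have hshift := Nat.choose_succ_right_eq (j + (s + 1)) j
  rw [show j + (s + 1) - j = s + 1 by omega] at hshift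
  rw [Nat.ascFactorial_succ, hasc, Nat.choose_succ_succ']
  zify at hshift ⊢
  linear_combination -(↑((k + j + 1).ascFactorial s) : ℤ) * hshift

lemma slashCoeff_mul_factorial {k n j : ℕ} (hk : 1 ≤ k) (hj : j ≤ n) :
    slashCoeff k n j * (j ! * (n - j)! * (k + j - 1)!) = n ! * (k + n - 1)! := by
  obtain ⟨K, rfl⟩ := Nat.exists_eq_add_of_le' hk
  obtain ⟨t, rfl⟩ := Nat.exists_eq_add_of_le hj
  have hasc := Nat.factorial_mul_ascFactorial (K + j) t
  simp only [slashCoeff, Nat.add_sub_cancel_left, show K + 1 + j - 1 = K + j by omega,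
    show K + 1 + (j + t) - 1 = K + j + t by omega, show K + j + 1 = K + 1 + j by omega] at hasc ⊢
  rw [← hasc, Nat.choose_symm_add, ← Nat.add_choose_mul_factorial_mul_factorial j t]
  ring

lemma sum_slashCoeff_succ (k n : ℕ) (Z : ℕ → ℂ) :
    ∑ j ∈ Finset.range (n + 2), (slashCoeff k (n + 1) j : ℂ) * Z j =
      ∑ j ∈ Finset.range (n + 1), (slashCoeff k n j : ℂ) * ((k + n + j : ℂ) * Z j + Z (j + 1)) := by
  have hshift : ∑ j ∈ Finset.range (n + 1), (slashCoeff k n j : ℂ) * ((k + n + j : ℂ) * Z j) =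
      ∑ j ∈ Finset.range (n + 1),
          (slashCoeff k n (j + 1) : ℂ) * ((k + n + (j + 1 : ℕ) : ℂ) * Z (j + 1)) +
        (slashCoeff k n 0 : ℂ) * ((k + n + (0 : ℕ) : ℂ) * Z 0) := by
    rw [← Finset.sum_range_succ' (fun j => (slashCoeff k n j : ℂ) * ((k + n + j : ℂ) * Z j)),
      Finset.sum_range_succ _ (n + 1), slashCoeff_of_lt k (Nat.lt_succ_self n), Nat.cast_zero,
      zero_mul, add_zero]
  simp_rw [mul_add]
  rw [Finset.sum_range_succ', Finset.sum_add_distrib, hshift, add_right_comm,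
    ← Finset.sum_add_distrib]
  congr 1
  · refine Finset.sum_congr rfl fun j _ => ?_
    rw [slashCoeff_succ_succ]
    push_cast
    ring
  · rw [slashCoeff_succ_zero]
    push_cast
    ring

def cohenKuznetsov (k : ℕ) (G : ℕ → ℂ) : ℂ⟦X⟧ :=
  PowerSeries.mk fun n => G n / (n ! * (k + n - 1)! : ℂ)

def slashJet (k : ℕ) (E u : ℂ) (G : ℕ → ℂ) (n : ℕ) : ℂ :=
  ∑ j ∈ Finset.range (n + 1), (slashCoeff k n j : ℂ) * (E ^ (n - j) * u ^ (k + n + j) * G j)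

def jetBracket (k₁ k₂ m : ℕ) (G H : ℕ → ℂ) : ℂ :=
  ∑ r ∈ Finset.range (m + 1),
    (-1 : ℂ) ^ r * ((m + k₁ - 1).choose (m - r) : ℂ) * ((m + k₂ - 1).choose r : ℂ) * G r * H (m - r)

lemma cohenKuznetsov_slashJet {k : ℕ} (hk : 1 ≤ k) (E u : ℂ) (G : ℕ → ℂ) :
    cohenKuznetsov k (slashJet k E u G) =
      C (u ^ k) * rescale (u ^ 2) (cohenKuznetsov k G) * rescale (E * u) (exp ℂ) := by
  ext n
  rw [mul_assoc, coeff_C_mul, coeff_mul, Finset.Nat.sum_antidiagonal_eq_sum_range_succ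
    (fun j i => coeff j (rescale (u ^ 2) (cohenKuznetsov k G)) * coeff i (rescale (E * u) (exp ℂ))),
    cohenKuznetsov, coeff_mk, slashJet, Finset.sum_div, Finset.mul_sum]
  refine Finset.sum_congr rfl fun j hj => ?_
  have hjn : j ≤ n := Nat.lt_succ_iff.mp (Finset.mem_range.mp hj)
  have hfac : (slashCoeff k n j : ℂ) * (j ! * (n - j)! * (k + j - 1)!) = n ! * (k + n - 1)! := by
    exact_mod_cast slashCoeff_mul_factorial hk hjn
  have hu : u ^ (k + n + j) = u ^ k * (u ^ 2) ^ j * u ^ (n - j) := by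
    rw [← pow_mul, ← pow_add, ← pow_add]; congr 1; omega
  simp only [cohenKuznetsov, coeff_rescale, coeff_mk, coeff_exp, map_div₀, map_one, map_natCast, hu]
  have hW : (slashCoeff k n j : ℂ) ≠ 0 :=
    left_ne_zero_of_mul (by rw [hfac]; simp [Nat.factorial_ne_zero])
  rw [← hfac]
  field_simp
  ring

lemma rescale_C {R : Type*} [CommSemiring R] (a r : R) : rescale a (C r) = C r := by
  ext n
  rcases n with _ | n <;> simp [coeff_C]

lemma jetBracket_eq_coeff {k₁ k₂ : ℕ} (hk₁ : 1 ≤ k₁) (hk₂ : 1 ≤ k₂) (m : ℕ) (G H : ℕ → ℂ) :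
    jetBracket k₁ k₂ m G H = (m + k₁ - 1)! * (m + k₂ - 1)! *
      coeff m (rescale (-1) (cohenKuznetsov k₁ G) * cohenKuznetsov k₂ H) := by
  rw [coeff_mul, Finset.Nat.sum_antidiagonal_eq_sum_range_succ
    (fun r s => coeff r (rescale (-1) (cohenKuznetsov k₁ G)) * coeff s (cohenKuznetsov k₂ H)),
    jetBracket, Finset.mul_sum]
  refine Finset.sum_congr rfl fun r hr => ?_
  have hrm : r ≤ m := Nat.lt_succ_iff.mp (Finset.mem_range.mp hr)
  have h₁ := Nat.choose_mul_factorial_mul_factorial (show m - r ≤ m + k₁ - 1 by omega)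
  have h₂ := Nat.choose_mul_factorial_mul_factorial (show r ≤ m + k₂ - 1 by omega)
  rw [show m + k₁ - 1 - (m - r) = k₁ + r - 1 by omega] at h₁
  rw [show m + k₂ - 1 - r = k₂ + (m - r) - 1 by omega] at h₂
  simp only [cohenKuznetsov, coeff_rescale, coeff_mk]
  rw [← h₁, ← h₂]
  push_cast
  field_simp [Nat.factorial_ne_zero]

lemma jetBracket_slashJet {k₁ k₂ : ℕ} (hk₁ : 1 ≤ k₁) (hk₂ : 1 ≤ k₂) (m : ℕ) (E u : ℂ)
    (G H : ℕ → ℂ) :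
    jetBracket k₁ k₂ m (slashJet k₁ E u G) (slashJet k₂ E u H) =
      u ^ (k₁ + k₂ + 2 * m) * jetBracket k₁ k₂ m G H := by
  have hexp : rescale (-(E * u)) (exp ℂ) * rescale (E * u) (exp ℂ) = 1 := by
    rw [exp_mul_exp_eq_exp_add, neg_add_cancel, rescale_zero_apply, constantCoeff_exp, map_one]
  have hseries : rescale (-1) (cohenKuznetsov k₁ (slashJet k₁ E u G)) *
      cohenKuznetsov k₂ (slashJet k₂ E u H) =
      C (u ^ (k₁ + k₂)) * rescale (u ^ 2) (rescale (-1) (cohenKuznetsov k₁ G) *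
        cohenKuznetsov k₂ H) := by
    rw [cohenKuznetsov_slashJet hk₁, cohenKuznetsov_slashJet hk₂]
    simp only [map_mul, rescale_C, rescale_rescale, pow_add]
    rw [show E * u * -1 = -(E * u) by ring, show u ^ 2 * -1 = -1 * u ^ 2 by ring]
    linear_combination (C (u ^ k₁) * C (u ^ k₂) * rescale (-1 * u ^ 2) (cohenKuznetsov k₁ G) *
      rescale (u ^ 2) (cohenKuznetsov k₂ H)) * hexp
  rw [jetBracket_eq_coeff hk₁ hk₂, jetBracket_eq_coeff hk₁ hk₂, hseries, coeff_C_mul,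
    coeff_rescale]
  ring

lemma deriv_eq_two_pi_I_mul_Dop (f : ℂ → ℂ) (z : ℂ) :
    deriv f z = 2 * Real.pi * I * Dop f z := by
  have : (2 * Real.pi * I : ℂ) ≠ 0 := by simp [Real.pi_ne_zero, I_ne_zero]
  simp only [Dop]
  field_simp

lemma differentiableOn_iterate_Dop {f : ℂ → ℂ} {U : Set ℂ} (hU : IsOpen U)
    (hf : DifferentiableOn ℂ f U) (n : ℕ) : DifferentiableOn ℂ (Dop^[n] f) U := by
  induction n with
  | zero => exact hf
  | succ n ih =>
    rw [Function.iterate_succ_apply']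
    exact ((ih.analyticOnNhd hU).deriv.differentiableOn).const_mul _

lemma hasDerivAt_inv_linear_pow {c d z : ℂ} (hz : c * z + d ≠ 0) (N : ℕ) :
    HasDerivAt (fun x => (c * x + d)⁻¹ ^ N) (-(N * c) * (c * z + d)⁻¹ ^ (N + 1)) z := by
  have hlin : HasDerivAt (fun x => c * x + d) c z := by
    simpa using ((hasDerivAt_id z).const_mul c).add_const d
  rcases N with _ | N
  · simpa using hasDerivAt_const z (1 : ℂ)
  refine ((hlin.fun_inv hz).fun_pow (N + 1)).congr_deriv ?_
  rw [Nat.add_sub_cancel, div_eq_mul_inv, ← inv_pow]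
  ring

def mobius (a b c d : ℝ) (z : ℂ) : ℂ := ((a : ℂ) * z + b) / ((c : ℂ) * z + d)

lemma slashAct_natCast (k : ℕ) (f : ℂ → ℂ) (a b c d : ℝ) (z : ℂ) :
    slashAct k f a b c d z = ((c : ℂ) * z + d)⁻¹ ^ k * f (mobius a b c d z) := by
  simp [slashAct, mobius, zpow_neg]

section SL2

variable {a b c d : ℝ} (hdet : a * d - b * c = 1)
include hdet

lemma denom_ne_zero {z : ℂ} (hz : z ∈ UpperHalf) : (c : ℂ) * z + d ≠ 0 := by
  intro h
  have hc : c = 0 := by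
    have := congrArg Complex.im h
    simp only [add_im, mul_im, ofReal_re, ofReal_im, zero_mul, add_zero] at this
    exact (mul_eq_zero.mp this).resolve_right hz.ne'
  have hd : d = 0 := by simpa [hc] using congrArg Complex.re h
  simp [hc, hd] at hdet

lemma mobius_mem_upperHalf {z : ℂ} (hz : z ∈ UpperHalf) : mobius a b c d z ∈ UpperHalf := by
  have him : (mobius a b c d z).im = z.im / Complex.normSq ((c : ℂ) * z + d) := by
    rw [mobius, Complex.div_im]
    simp only [add_im, add_re, mul_im, mul_re, ofReal_re, ofReal_im]
    rw [div_sub_div_same]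
    congr 1
    linear_combination z.im * hdet
  show 0 < (mobius a b c d z).im
  rw [him]
  exact div_pos hz (Complex.normSq_pos.mpr (denom_ne_zero hdet hz))

lemma hasDerivAt_mobius {z : ℂ} (hz : z ∈ UpperHalf) :
    HasDerivAt (mobius a b c d) (((c : ℂ) * z + d)⁻¹ ^ 2) z := by
  have hw := denom_ne_zero hdet hz
  have hdetC : (a : ℂ) * d - b * c = 1 := by exact_mod_cast hdet
  have hnum : HasDerivAt (fun x : ℂ => (a : ℂ) * x + b) a z := by
    simpa using ((hasDerivAt_id z).const_mul (a : ℂ)).add_const (b : ℂ)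
  have hden : HasDerivAt (fun x : ℂ => (c : ℂ) * x + d) c z := by
    simpa using ((hasDerivAt_id z).const_mul (c : ℂ)).add_const (d : ℂ)
  refine (hnum.div hden hw).congr_deriv ?_
  field_simp
  linear_combination hdetC

lemma hasDerivAt_inv_denom_pow_mul_comp_mobius {F : ℂ → ℂ} {z : ℂ} (hz : z ∈ UpperHalf)
    (hF : DifferentiableAt ℂ F (mobius a b c d z)) (N : ℕ) :
    HasDerivAt (fun x => ((c : ℂ) * x + d)⁻¹ ^ N * F (mobius a b c d x))
      (-(N * c) * ((c : ℂ) * z + d)⁻¹ ^ (N + 1) * F (mobius a b c d z) +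
        ((c : ℂ) * z + d)⁻¹ ^ (N + 2) * deriv F (mobius a b c d z)) z :=
  ((hasDerivAt_inv_linear_pow (denom_ne_zero hdet hz) N).mul
    (hF.hasDerivAt.comp z (hasDerivAt_mobius hdet hz))).congr_deriv
      (by rw [Function.comp_apply]; ring)

lemma iterate_Dop_slashAct {k : ℕ} {f : ℂ → ℂ} (hf : DifferentiableOn ℂ f UpperHalf) (n : ℕ)
    {z : ℂ} (hz : z ∈ UpperHalf) :
    Dop^[n] (slashAct k f a b c d) z =
      slashJet k (-c / (2 * Real.pi * I)) (((c : ℂ) * z + d)⁻¹)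
        (fun j => Dop^[j] f (mobius a b c d z)) n := by
  induction n generalizing z with
  | zero => simp [slashJet, slashCoeff, slashAct_natCast]
  | succ n ih =>
    have hU : IsOpen UpperHalf := isOpen_lt continuous_const continuous_im
    have hev : Dop^[n] (slashAct k f a b c d) =ᶠ[nhds z] fun x =>
        slashJet k (-c / (2 * Real.pi * I)) (((c : ℂ) * x + d)⁻¹)
          (fun j => Dop^[j] f (mobius a b c d x)) n :=
      Filter.eventuallyEq_of_mem (hU.mem_nhds hz) fun x hx => ih hx
    have hjet := HasDerivAt.fun_sum (u := Finset.range (n + 1)) fun j _ =>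
      (hasDerivAt_inv_denom_pow_mul_comp_mobius hdet hz
        ((differentiableOn_iterate_Dop hU hf j).differentiableAt
          (hU.mem_nhds (mobius_mem_upperHalf hdet hz))) (k + n + j)).const_mul
        ((slashCoeff k n j : ℂ) * (-c / (2 * Real.pi * I)) ^ (n - j))
    have hT : (2 * Real.pi * I : ℂ)⁻¹ * (2 * Real.pi * I) = 1 :=
      inv_mul_cancel₀ (by simp [Real.pi_ne_zero, I_ne_zero])
    rw [Function.iterate_succ_apply', Dop, hev.deriv_eq]
    simp only [slashJet, mul_assoc] at hjet ⊢
    rw [hjet.deriv, sum_slashCoeff_succ, Finset.mul_sum]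
    refine Finset.sum_congr rfl fun j hj => ?_
    rw [deriv_eq_two_pi_I_mul_Dop, ← Function.iterate_succ_apply' Dop,
      show n + 1 - (j + 1) = n - j by omega,
      show n + 1 - j = n - j + 1 by have := Finset.mem_range.mp hj; omega, pow_succ]
    push_cast
    linear_combination ((slashCoeff k n j : ℂ) * (-c / (2 * Real.pi * I)) ^ (n - j) *
      ((c : ℂ) * z + d)⁻¹ ^ (k + n + j + 2) * Dop^[j + 1] f (mobius a b c d z)) * hT

end SL2

end RankinCohen

open RankinCohen

/-- For integers `k₁, k₂ ≥ 1`, `m ≥ 0`, holomorphic `g, h : ℍ → ℂ` and `γ ∈ SL₂(ℝ)`: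
`[g, h]_m |_{k₁+k₂+2m} γ = [ g|_{k₁} γ , h|_{k₂} γ ]_m` on ℍ. -/
theorem rankin_cohen_stmt16 (k₁ k₂ : ℕ) (hk₁ : 1 ≤ k₁) (hk₂ : 1 ≤ k₂) (m : ℕ)
    (g h : ℂ → ℂ)
    (hg : DifferentiableOn ℂ g UpperHalf) (hh : DifferentiableOn ℂ h UpperHalf)
    (a b c d : ℝ) (hdet : a * d - b * c = 1) :
    ∀ z ∈ UpperHalf,
      slashAct ((k₁ : ℤ) + k₂ + 2 * m) (RCbracket k₁ k₂ m g h) a b c d z =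
        RCbracket k₁ k₂ m (slashAct k₁ g a b c d) (slashAct k₂ h a b c d) z := by
  intro z hz
  have hweight : (k₁ : ℤ) + k₂ + 2 * m = ((k₁ + k₂ + 2 * m : ℕ) : ℤ) := by push_cast; ring
  rw [hweight, slashAct_natCast]
  calc _ = ((c : ℂ) * z + d)⁻¹ ^ (k₁ + k₂ + 2 * m) * jetBracket k₁ k₂ m
          (fun r => Dop^[r] g (mobius a b c d z)) (fun s => Dop^[s] h (mobius a b c d z)) := rfl
    _ = jetBracket k₁ k₂ m
          (slashJet k₁ (-c / (2 * Real.pi * I)) ((c : ℂ) * z + d)⁻¹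
            (fun r => Dop^[r] g (mobius a b c d z)))
          (slashJet k₂ (-c / (2 * Real.pi * I)) ((c : ℂ) * z + d)⁻¹
            (fun s => Dop^[s] h (mobius a b c d z))) := (jetBracket_slashJet hk₁ hk₂ m _ _ _ _).symm
    _ = _ := by
      simp only [RCbracket, jetBracket, iterate_Dop_slashAct hdet hg _ hz,
        iterate_Dop_slashAct hdet hh _ hz]
end
end

section
/- There do not exist an even integer k ≥ 2 and an integer s ≥ 1 such that, as rational numbers, both 3^s(1 + 3^{k−1}) + 2^s + 28 = 2^{k+s−4}(2^s − 2^3) and 5^s(1 + 5^{k−1}) + 3^{s+1}(1 + 3^{k−1}) + 2^{2s+1}(1 + 2^{k−1})² + 7·2^{s+2}(1 + 2^{k−1}) − 3·2^{k+2s−1} + 78 = 0 hold. -/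
/-- There do not exist an even integer `k ≥ 2` and an integer `s ≥ 1` such that, as rational
numbers, both `3^s(1 + 3^{k−1}) + 2^s + 28 = 2^{k+s−4}(2^s − 2^3)` and
`5^s(1 + 5^{k−1}) + 3^{s+1}(1 + 3^{k−1}) + 2^{2s+1}(1 + 2^{k−1})² + 7·2^{s+2}(1 + 2^{k−1})`
`− 3·2^{k+2s−1} + 78 = 0` hold. -/
theorem rankin_cohen_stmt17 :
    ¬ ∃ k s : ℕ, 2 ≤ k ∧ Even k ∧ 1 ≤ s ∧
      ((3 : ℚ) ^ s * (1 + 3 ^ (k - 1)) + 2 ^ s + 28 =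
        (2 : ℚ) ^ ((k : ℤ) + (s : ℤ) - 4) * (2 ^ s - 2 ^ 3)) ∧
      ((5 : ℚ) ^ s * (1 + 5 ^ (k - 1)) + 3 ^ (s + 1) * (1 + 3 ^ (k - 1)) +
          2 ^ (2 * s + 1) * (1 + 2 ^ (k - 1)) ^ 2 + 7 * 2 ^ (s + 2) * (1 + 2 ^ (k - 1)) -
          3 * (2 : ℚ) ^ ((k : ℤ) + 2 * (s : ℤ) - 1) + 78 = 0) := by
  rintro ⟨k, s, hk, -, hs, -, h2⟩
  obtain ⟨a, rfl⟩ : ∃ a, k = a + 2 := ⟨k - 2, by omega⟩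
  obtain ⟨b, rfl⟩ : ∃ b, s = b + 1 := ⟨s - 1, by omega⟩
  have he : ((a + 2 : ℕ) : ℤ) + 2 * ((b + 1 : ℕ) : ℤ) - 1 = ((a + 2 * b + 3 : ℕ) : ℤ) := by
    push_cast; ring
  rw [he, zpow_natCast] at h2
  have h1 : (a + 2) - 1 = a + 1 := by omega
  rw [h1] at h2
  have e1 : (2 : ℚ) ^ (a + 2 * b + 3) * 4 = 2 ^ (2 * (b + 1) + 1) * 2 ^ (a + 1) * 2 := by
    rw [← pow_add, show 2 * (b + 1) + 1 + (a + 1) = (a + 2 * b + 3) + 1 by ring, pow_succ]; ring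
  nlinarith [pow_pos (by norm_num : (0:ℚ) < 5) (b + 1), pow_pos (by norm_num : (0:ℚ) < 5) (a + 1),
    pow_pos (by norm_num : (0:ℚ) < 3) (b + 2), pow_pos (by norm_num : (0:ℚ) < 3) (a + 1),
    pow_pos (by norm_num : (0:ℚ) < 2) (a + 1), pow_pos (by norm_num : (0:ℚ) < 2) (b + 3),
    pow_pos (by norm_num : (0:ℚ) < 2) (2 * (b + 1) + 1),
    mul_pos (pow_pos (by norm_num : (0:ℚ) < 5) (b + 1)) (pow_pos (by norm_num : (0:ℚ) < 5) (a + 1)),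
    mul_pos (pow_pos (by norm_num : (0:ℚ) < 3) (b + 2)) (pow_pos (by norm_num : (0:ℚ) < 3) (a + 1)),
    mul_pos (pow_pos (by norm_num : (0:ℚ) < 2) (b + 3)) (pow_pos (by norm_num : (0:ℚ) < 2) (a + 1)),
    mul_pos (pow_pos (by norm_num : (0:ℚ) < 2) (2 * (b + 1) + 1)) (pow_pos (by norm_num : (0:ℚ) < 2) (a + 1)),
    sq_nonneg ((2:ℚ) ^ (a + 1))]
end

section
/- For every even integer k ≥ 2, if the rational number 2k/B_k is an integer, where B_k denotes the k-th Bernoulli number (which is nonzero for even k), then k ∈ {2, 4, 6, 8, 10, 14}. -/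
/-!
If `2k / B_k = m` is an integer, then `m ≠ 0` and `|B_k| = 2k / |m| ≤ 2k`. On the other hand
Euler's formula `ζ(k) = (2π)^k |B_k| / (2 k!)` together with `ζ(k) ≥ 1` gives
`|B_k| ≥ 2 k! / (2π)^k`, which exceeds `2k` once `k ≥ 18`. Of the even `k < 18`, only `k = 12` and
`k = 16` are left to exclude, by the primes `691` and `3617` in the numerators of `B_12` and `B_16`.
-/

open Finset Real
open scoped Nat

theorem bernoulli'_six : bernoulli' 6 = 1 / 42 := by
  rw [bernoulli'_def]
  norm_num [sum_range_succ, bernoulli'_eq_zero_of_odd, Nat.choose]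

theorem bernoulli'_eight : bernoulli' 8 = -1 / 30 := by
  rw [bernoulli'_def]
  norm_num [sum_range_succ, bernoulli'_eq_zero_of_odd, Nat.choose, bernoulli'_six]

theorem bernoulli'_ten : bernoulli' 10 = 5 / 66 := by
  rw [bernoulli'_def]
  norm_num [sum_range_succ, bernoulli'_eq_zero_of_odd, Nat.choose, bernoulli'_six,
    bernoulli'_eight]

theorem bernoulli'_twelve : bernoulli' 12 = -691 / 2730 := by
  rw [bernoulli'_def]
  norm_num [sum_range_succ, bernoulli'_eq_zero_of_odd, Nat.choose, bernoulli'_six,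
    bernoulli'_eight, bernoulli'_ten]

theorem bernoulli'_fourteen : bernoulli' 14 = 7 / 6 := by
  rw [bernoulli'_def]
  norm_num [sum_range_succ, bernoulli'_eq_zero_of_odd, Nat.choose, bernoulli'_six,
    bernoulli'_eight, bernoulli'_ten, bernoulli'_twelve]

theorem bernoulli'_sixteen : bernoulli' 16 = -3617 / 510 := by
  rw [bernoulli'_def]
  norm_num [sum_range_succ, bernoulli'_eq_zero_of_odd, Nat.choose, bernoulli'_six,
    bernoulli'_eight, bernoulli'_ten, bernoulli'_twelve, bernoulli'_fourteen]

theorem bernoulli_twelve : bernoulli 12 = -691 / 2730 := by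
  rw [bernoulli_eq_bernoulli'_of_ne_one (by norm_num), bernoulli'_twelve]

theorem bernoulli_sixteen : bernoulli 16 = -3617 / 510 := by
  rw [bernoulli_eq_bernoulli'_of_ne_one (by norm_num), bernoulli'_sixteen]

theorem two_mul_div_bernoulli_twelve_ne_intCast (m : ℤ) : 2 * 12 / bernoulli 12 ≠ m := by
  rw [bernoulli_twelve]
  norm_num
  field_simp
  norm_cast
  omega

theorem two_mul_div_bernoulli_sixteen_ne_intCast (m : ℤ) : 2 * 16 / bernoulli 16 ≠ m := by
  rw [bernoulli_sixteen]
  norm_num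
  field_simp
  norm_cast
  omega

theorem abs_le_abs_of_div_eq_intCast {K : Type*} [Field K] [LinearOrder K]
    [IsStrictOrderedRing K] {x y : K} {m : ℤ} (hx : x ≠ 0) (h : x / y = m) : |y| ≤ |x| := by
  rcases eq_or_ne y 0 with rfl | hy
  · simp
  have hm : (m : K) ≠ 0 := by rw [← h]; exact div_ne_zero hx hy
  have hm_abs : (1 : K) ≤ |(m : K)| := by
    rw [← Int.cast_abs]; exact_mod_cast Int.one_le_abs (by exact_mod_cast hm)
  calc |y| = 1 * |y| := (one_mul _).symm
    _ ≤ |(m : K)| * |y| := by gcongr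
    _ = |x| := by rw [← abs_mul, ← h, div_mul_cancel₀ x hy]

theorem two_mul_factorial_le_two_pi_pow_mul_abs_bernoulli {n : ℕ} (hn : n ≠ 0) :
    2 * ((2 * n)! : ℝ) ≤ (2 * π) ^ (2 * n) * |(bernoulli (2 * n) : ℝ)| := by
  have hzeta : 1 ≤ 2 ^ (2 * n - 1) * π ^ (2 * n) * |(bernoulli (2 * n) : ℝ)| / (2 * n)! := by
    -- `ζ(2n)` is at least its first term
    have := (le_hasSum (hasSum_zeta_nat hn) 1 fun i _ => by positivity).trans (le_abs_self _)
    simpa [abs_div, abs_mul, abs_of_pos pi_pos] using this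
  have hpow : (2 : ℝ) ^ (2 * n) = 2 * 2 ^ (2 * n - 1) := by
    rw [← pow_succ']; congr 1; omega
  rw [le_div_iff₀ (by positivity)] at hzeta
  rw [mul_pow, hpow]
  linarith

theorem mul_pow_lt_factorial {c : ℝ} (hc₀ : 0 ≤ c) {n₀ : ℕ} (hc : c ≤ n₀)
    (h₀ : n₀ * c ^ n₀ < n₀ !) {n : ℕ} (hn : n₀ ≤ n) : n * c ^ n < n ! := by
  induction n, hn using Nat.le_induction with
  | base => exact h₀
  | succ n hn ih =>
    have hcn : c ≤ n := hc.trans (by exact_mod_cast hn)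
    calc ((n + 1 : ℕ) : ℝ) * c ^ (n + 1) = (n + 1) * (c * c ^ n) := by push_cast; ring
      _ ≤ (n + 1) * (n * c ^ n) := by gcongr
      _ < (n + 1) * n ! := by gcongr
      _ = (n + 1)! := by rw [Nat.factorial_succ]; push_cast; ring

theorem mul_two_pi_pow_lt_factorial {k : ℕ} (hk : 18 ≤ k) : k * (2 * π) ^ k < k ! := by
  have h_rat : (k : ℝ) * (63 / 10) ^ k < k ! :=
    mul_pow_lt_factorial (by norm_num) (by norm_num) (by norm_num [Nat.factorial]) hk
  have h_two_pi : 2 * π ≤ 63 / 10 := by linarith [pi_lt_d2]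
  calc (k : ℝ) * (2 * π) ^ k ≤ k * (63 / 10) ^ k := by gcongr
    _ < k ! := h_rat

theorem two_mul_lt_abs_bernoulli {k : ℕ} (hk : 18 ≤ k) (hke : Even k) :
    (2 * k : ℚ) < |bernoulli k| := by
  obtain ⟨n, rfl⟩ := hke
  rw [← two_mul] at hk ⊢
  have hlower := two_mul_factorial_le_two_pi_pow_mul_abs_bernoulli (n := n) (by omega)
  have hfactorial := mul_two_pi_pow_lt_factorial hk
  have hpos : (0 : ℝ) < (2 * π) ^ (2 * n) := by positivity
  suffices (2 * (2 * n : ℕ) : ℝ) < |(bernoulli (2 * n) : ℝ)| by exact_mod_cast this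
  nlinarith

/-- For every even integer `k ≥ 2`, if the rational number `2k/B_k` is an integer (with `B_k`
the `k`-th Bernoulli number, nonzero for even `k`), then `k ∈ {2, 4, 6, 8, 10, 14}`. -/
theorem rankin_cohen_stmt18 (k : ℕ) (hk : 2 ≤ k) (hke : Even k)
    (h : ∃ m : ℤ, (2 * k : ℚ) / bernoulli k = (m : ℚ)) :
    k = 2 ∨ k = 4 ∨ k = 6 ∨ k = 8 ∨ k = 10 ∨ k = 14 := by
  obtain ⟨m, hm⟩ := h
  rcases lt_or_ge k 18 with hlt | hge
  · interval_cases k <;> first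
      | decide
      | exact absurd hke (by decide)
      | exact absurd hm (mod_cast two_mul_div_bernoulli_twelve_ne_intCast m)
      | exact absurd hm (mod_cast two_mul_div_bernoulli_sixteen_ne_intCast m)
  · have hle : |bernoulli k| ≤ 2 * k := by
      simpa using abs_le_abs_of_div_eq_intCast (by positivity) hm
    exact absurd hle (not_le.2 (two_mul_lt_abs_bernoulli hge hke))
end
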